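/- Let f be a differentiable, strictly decreasing probability density and α ∈ ℝ \ {2}. Then for every λ ≠ 1 such that the quantities are well defined, N_λ[D_α[f]] = φ_{1-λ, 2-α}[f]^{2-α}; equivalently, for p ≠ 0 and β ≠ 0, φ_{p,β}[U_{2-β}[f]] = N_{1-p}[f]^{1/β}. -/

import Mathlib

open MeasureTheory Real Set Filter Bornology

/-- The canonical change of variable `s(x)` of the down transformation:
`s(x) = f(x)^(2-α)/(α-2)` for `α ≠ 2` and `s(x) = -log f(x)` for `α = 2`. -/
noncomputable def sChange (α : ℝ) (f : ℝ → ℝ) (x : ℝ) : ℝ :=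
  if α = 2 then -Real.log (f x) else f x ^ (2 - α) / (α - 2)

/-- The value of the down transformation at the point `s(x)`:
`D_α[f](s(x)) = f(x)^α |f'(x)|⁻¹`. -/
noncomputable def downAt (α : ℝ) (f : ℝ → ℝ) (x : ℝ) : ℝ :=
  f x ^ α / |deriv f x|

/-- `g` is the down-`α`-transform of `f`, where `I` is the domain of `f`. -/
def IsDownTransform (α : ℝ) (f g : ℝ → ℝ) (I : Set ℝ) : Prop :=
  ∀ x ∈ I, g (sChange α f x) = downAt α f x

/-- The derivative `u'(x) = -|(α-2)x|^(1/(α-2)) f(x)` (resp. `-eˣ f(x)` for `α = 2`)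
of the change of variable of the up transformation. -/
noncomputable def upDeriv (α : ℝ) (f : ℝ → ℝ) (x : ℝ) : ℝ :=
  -((if α = 2 then Real.exp x else |(α - 2) * x| ^ (α - 2)⁻¹) * f x)

/-- The value of the up transformation at the point `u(x)`:
`U_α[f](u(x)) = |(α-2)x|^(1/(2-α))` (resp. `e^(-x)` for `α = 2`). -/
noncomputable def upPoint (α : ℝ) (x : ℝ) : ℝ :=
  if α = 2 then Real.exp (-x) else |(α - 2) * x| ^ (2 - α)⁻¹

/-- `g` is an up-`α`-transform of `f` (the primitive `u` being defined up to translation),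
where `I` is the domain of `f`. -/
def IsUpTransform (α : ℝ) (f g : ℝ → ℝ) (I : Set ℝ) : Prop :=
  ∃ u : ℝ → ℝ, (∀ x ∈ I, HasDerivAt u (upDeriv α f x) x) ∧
    ∀ x ∈ I, g (u x) = upPoint α x

/-- The canonical primitive of the up change of variable, with reference point `x₀`:
`u(x) = ∫_x^{x₀} |(α-2)t|^(1/(α-2)) f(t) dt` (resp. with `eᵗ` for `α = 2`). -/
noncomputable def upPrim (α x₀ : ℝ) (f : ℝ → ℝ) (x : ℝ) : ℝ :=
  ∫ t in x..x₀, (if α = 2 then Real.exp t else |(α - 2) * t| ^ (α - 2)⁻¹) * f t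

/-- `f` is a probability density supported on `I`. -/
structure IsDensityOn (f : ℝ → ℝ) (I : Set ℝ) : Prop where
  pos : ∀ x ∈ I, 0 < f x
  zero : ∀ x ∉ I, f x = 0
  normalized : (∫ x in I, f x) = 1

/-- `f` is differentiable with `f' < 0` on `I`. -/
def IsSmoothDecOn (f : ℝ → ℝ) (I : Set ℝ) : Prop :=
  (∀ x ∈ I, DifferentiableAt ℝ f x) ∧ (∀ x ∈ I, deriv f x < 0)

/-!
Both identities are changes of variables. Along `s = s(x)` one has `ds = f^(1-α) |f'| dx` and
`D_α[f](s)^λ = f^(αλ) |f'|^(-λ)`, which turns the entropy integrand of `D_α[f]` into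
`|f^(-α) f'|^(1-λ) f`. Along `v = u(x)`, the inverse function theorem gives
`|h^(β-2) h'| (u x) = 1 / f x` for `h = U_(2-β)[f]`, while `|u'| h(u) = f`, which turns the
Fisher integrand of `h` into `f^(1-p)`. Both substitutions are injective: `s` has positive
derivative, and `u'` is negative except at `x = 0`.
-/

open Topology

theorem HasStrictDerivAt.hasDerivAt_of_comp_eventuallyEq {𝕜 : Type*} [NontriviallyNormedField 𝕜]
    [CompleteSpace 𝕜] {u h q : 𝕜 → 𝕜} {u' q' x : 𝕜} (hu : HasStrictDerivAt u u' x)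
    (hu' : u' ≠ 0) (hq : HasDerivAt q q' x) (hhq : h ∘ u =ᶠ[𝓝 x] q) :
    HasDerivAt h (q' / u') (u x) := by
  set W := hu.localInverse u u' x hu'
  have hW : HasDerivAt W u'⁻¹ (u x) := (hu.to_localInverse hu').hasDerivAt
  have hWx : W (u x) = x := (hu.eventually_left_inverse hu').self_of_nhds
  have hWq : ∀ᶠ v in 𝓝 (u x), h (u (W v)) = q (W v) :=
    hW.continuousAt.tendsto.eventually (hWx ▸ hhq)
  have hhW : h =ᶠ[𝓝 (u x)] q ∘ W := by
    filter_upwards [hu.eventually_right_inverse hu', hWq] with v hv hv'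
    rwa [hv] at hv'
  rw [div_eq_mul_inv]
  exact ((hWx ▸ hq).comp (u x) hW).congr_of_eventuallyEq hhW

theorem strictAntiOn_of_hasDerivAt_nonpos_of_neg_off_countable {D S : Set ℝ} (hD : Convex ℝ D)
    {u u' : ℝ → ℝ} (hu : ∀ x ∈ D, HasDerivAt u (u' x) x)
    (hle : ∀ x ∈ D, u' x ≤ 0) (hS : S.Countable) (hlt : ∀ x ∈ D \ S, u' x < 0) :
    StrictAntiOn u D := by
  have hanti : AntitoneOn u D := antitoneOn_of_hasDerivWithinAt_nonpos hD
    (fun x hx => (hu x hx).continuousAt.continuousWithinAt)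
    (fun x hx => (hu x (interior_subset hx)).hasDerivWithinAt)
    (fun x hx => hle x (interior_subset hx))
  intro x hx y hy hxy
  refine (hanti hx hy hxy.le).lt_of_ne fun hxy_eq => ?_
  obtain ⟨z, hz, hzS⟩ := (hS.dense_compl ℝ).inter_open_nonempty _ isOpen_Ioo (nonempty_Ioo.2 hxy)
  have hIcc : Icc x y ⊆ D := hD.ordConnected.out hx hy
  have hconst : ∀ t ∈ Icc x y, u t = u x := fun t ht =>
    le_antisymm (hanti hx (hIcc ht) ht.1) (hxy_eq ▸ hanti (hIcc ht) hy ht.2)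
  have hz0 : HasDerivAt u 0 z := (hasDerivAt_const z (u x)).congr_of_eventuallyEq
    (eventually_of_mem (isOpen_Ioo.mem_nhds hz) fun t ht => hconst t (Ioo_subset_Icc_self ht))
  have hzD : z ∈ D := hIcc (Ioo_subset_Icc_self hz)
  exact (hlt z ⟨hzD, hzS⟩).ne ((hu z hzD).unique hz0)

theorem sChange_of_ne {α : ℝ} (hα : α ≠ 2) (f : ℝ → ℝ) :
    sChange α f = fun x => f x ^ (2 - α) / (α - 2) := by
  funext x
  simp only [sChange, if_neg hα]

theorem hasDerivAt_sChange {α x : ℝ} {f : ℝ → ℝ} (hα : α ≠ 2) (hf : DifferentiableAt ℝ f x)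
    (hfx : 0 < f x) : HasDerivAt (sChange α f) (-(deriv f x * f x ^ (1 - α))) x := by
  have hα2 : α - 2 ≠ 0 := sub_ne_zero.mpr hα
  rw [sChange_of_ne hα]
  refine ((hf.hasDerivAt.rpow_const (p := 2 - α) (Or.inl hfx.ne')).div_const (α - 2)).congr_deriv ?_
  rw [show 2 - α - 1 = 1 - α by ring]
  field_simp
  ring

theorem abs_deriv_sChange_mul_downAt_rpow {α x : ℝ} {f : ℝ → ℝ} (hfx : 0 < f x)
    (hf' : deriv f x ≠ 0) (lam : ℝ) :
    |-(deriv f x * f x ^ (1 - α))| * downAt α f x ^ lam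
      = |f x ^ ((2 - α) - 2) * deriv f x| ^ (1 - lam) * f x := by
  have hd : 0 < |deriv f x| := abs_pos.mpr hf'
  rw [downAt, abs_neg, abs_mul, abs_mul, abs_of_pos (rpow_pos_of_pos hfx _),
    abs_of_pos (rpow_pos_of_pos hfx _), div_rpow (rpow_nonneg hfx.le _) hd.le,
    mul_rpow (rpow_nonneg hfx.le _) hd.le, ← rpow_mul hfx.le, ← rpow_mul hfx.le,
    rpow_sub hd, rpow_one, show 2 - α - 2 = -α by ring, rpow_sub hfx, rpow_one,
    neg_mul, rpow_neg hfx.le, mul_one_sub, rpow_sub hfx]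
  field_simp

theorem integral_downTransform_rpow {α : ℝ} {f g : ℝ → ℝ} {I : Set ℝ} (hIo : IsOpen I)
    (hIc : Convex ℝ I) (hα : α ≠ 2) (hpos : ∀ x ∈ I, 0 < f x) (hmon : IsSmoothDecOn f I)
    (hg : IsDownTransform α f g I) (lam : ℝ) :
    ∫ s in sChange α f '' I, g s ^ lam
      = ∫ x in I, |f x ^ ((2 - α) - 2) * deriv f x| ^ (1 - lam) * f x := by
  obtain ⟨hdiff, hneg⟩ := hmon
  have hs : ∀ x ∈ I, HasDerivAt (sChange α f) (-(deriv f x * f x ^ (1 - α))) x :=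
    fun x hx => hasDerivAt_sChange hα (hdiff x hx) (hpos x hx)
  have hmono : StrictMonoOn (sChange α f) I := by
    refine strictMonoOn_of_hasDerivWithinAt_pos hIc
      (fun x hx => (hs x hx).continuousAt.continuousWithinAt)
      (fun x hx => (hs x (interior_subset hx)).hasDerivWithinAt) fun x hx => ?_
    rw [hIo.interior_eq] at hx
    exact neg_pos.mpr (mul_neg_of_neg_of_pos (hneg x hx) (rpow_pos_of_pos (hpos x hx) _))
  rw [integral_image_eq_integral_abs_deriv_smul hIo.measurableSet
    (fun x hx => (hs x hx).hasDerivWithinAt) hmono.injOn]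
  refine setIntegral_congr_fun hIo.measurableSet fun x hx => ?_
  rw [smul_eq_mul, hg x hx]
  exact abs_deriv_sChange_mul_downAt_rpow (hpos x hx) (hneg x hx).ne lam

theorem upDeriv_two_sub {β : ℝ} (hβ : β ≠ 0) (f : ℝ → ℝ) (x : ℝ) :
    upDeriv (2 - β) f x = -(|β * x| ^ (-β⁻¹) * f x) := by
  simp [upDeriv, hβ, abs_mul]

theorem upPoint_two_sub {β : ℝ} (hβ : β ≠ 0) :
    upPoint (2 - β) = fun x => |β * x| ^ β⁻¹ := by
  funext x
  simp [upPoint, hβ]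

theorem hasDerivAt_abs_mul_rpow_inv {β x : ℝ} (hβx : β * x ≠ 0) :
    HasDerivAt (fun t => |β * t| ^ β⁻¹) (SignType.sign (β * x) * |β * x| ^ (β⁻¹ - 1)) x := by
  have hβ : β ≠ 0 := left_ne_zero_of_mul hβx
  have hlin : HasDerivAt (fun t => β * t) β x := by simpa using (hasDerivAt_id x).const_mul β
  refine (((hasDerivAt_abs hβx).comp x hlin).rpow_const
    (Or.inl (abs_ne_zero.mpr hβx))).congr_deriv ?_
  simp [hβ]

theorem hasDerivAt_upTransform {β x : ℝ} {f u h : ℝ → ℝ} {I : Set ℝ} (hIo : IsOpen I)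
    (hβ : β ≠ 0) (hf : ContinuousOn f I) (hu : ∀ x ∈ I, HasDerivAt u (upDeriv (2 - β) f x) x)
    (hh : ∀ x ∈ I, h (u x) = upPoint (2 - β) x) (hx : x ∈ I) (hx0 : x ≠ 0) (hfx : 0 < f x) :
    HasDerivAt h (SignType.sign (β * x) * |β * x| ^ (β⁻¹ - 1) / upDeriv (2 - β) f x) (u x) := by
  have hβx : β * x ≠ 0 := mul_ne_zero hβ hx0
  have hcont : ContinuousAt (upDeriv (2 - β) f) x := by
    simp only [funext (upDeriv_two_sub hβ f)]
    exact (((continuous_abs.comp (continuous_const_mul β)).continuousAt.rpow_const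
      (Or.inl (abs_ne_zero.mpr hβx))).mul (hf.continuousAt (hIo.mem_nhds hx))).neg
  have hstrict : HasStrictDerivAt u (upDeriv (2 - β) f x) x :=
    hasStrictDerivAt_of_hasDerivAt_of_continuousAt
      (eventually_of_mem (hIo.mem_nhds hx) hu) hcont
  have hu' : upDeriv (2 - β) f x ≠ 0 := by
    rw [upDeriv_two_sub hβ]
    exact neg_ne_zero.mpr (mul_pos (rpow_pos_of_pos (abs_pos.mpr hβx) _) hfx).ne'
  refine hstrict.hasDerivAt_of_comp_eventuallyEq hu' (hasDerivAt_abs_mul_rpow_inv hβx) ?_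
  filter_upwards [hIo.mem_nhds hx] with y hy
  rw [Function.comp_apply, hh y hy, upPoint_two_sub hβ]

theorem abs_rpow_mul_deriv_upTransform {β x : ℝ} {f u h : ℝ → ℝ} {I : Set ℝ} (hIo : IsOpen I)
    (hβ : β ≠ 0) (hf : ContinuousOn f I) (hu : ∀ x ∈ I, HasDerivAt u (upDeriv (2 - β) f x) x)
    (hh : ∀ x ∈ I, h (u x) = upPoint (2 - β) x) (hx : x ∈ I) (hx0 : x ≠ 0) (hfx : 0 < f x) :
    |h (u x) ^ (β - 2) * deriv h (u x)| = (f x)⁻¹ := by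
  have hc : 0 < |β * x| := abs_pos.mpr (mul_ne_zero hβ hx0)
  have hsign : |(SignType.sign (β * x) : ℝ)| = 1 := by
    rcases (mul_ne_zero hβ hx0).lt_or_gt with hneg | hpos
    · simp [sign_neg hneg]
    · simp [sign_pos hpos]
  rw [(hasDerivAt_upTransform hIo hβ hf hu hh hx hx0 hfx).deriv, hh x hx, upPoint_two_sub hβ,
    upDeriv_two_sub hβ]
  set a := |β * x| ^ β⁻¹ with ha
  have ha0 : 0 < a := rpow_pos_of_pos hc _
  have hca : |β * x| = a ^ β := (rpow_inv_rpow hc.le hβ).symm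
  rw [rpow_neg hc.le, rpow_sub_one hc.ne', ← ha, hca, rpow_sub ha0, rpow_two]
  simp only [abs_mul, abs_div, abs_neg, abs_inv, hsign, abs_of_pos ha0, abs_of_pos hfx,
    abs_of_pos (rpow_pos_of_pos ha0 β), abs_pow]
  field_simp

theorem integral_upTransform_fisher {β : ℝ} {f u h : ℝ → ℝ} {I : Set ℝ} (hIo : IsOpen I)
    (hIc : Convex ℝ I) (hβ : β ≠ 0) (hpos : ∀ x ∈ I, 0 < f x) (hf : ContinuousOn f I)
    (hu : ∀ x ∈ I, HasDerivAt u (upDeriv (2 - β) f x) x)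
    (hh : ∀ x ∈ I, h (u x) = upPoint (2 - β) x) (p : ℝ) :
    ∫ v in u '' I, |h v ^ (β - 2) * deriv h v| ^ p * h v = ∫ x in I, f x ^ (1 - p) := by
  have hanti : StrictAntiOn u I := by
    refine strictAntiOn_of_hasDerivAt_nonpos_of_neg_off_countable hIc hu (fun x hx => ?_)
      (countable_singleton 0) fun x ⟨hx, hx0⟩ => ?_
    · rw [upDeriv_two_sub hβ]
      exact neg_nonpos.mpr (mul_nonneg (rpow_nonneg (abs_nonneg _) _) (hpos x hx).le)
    · rw [upDeriv_two_sub hβ]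
      exact neg_neg_of_pos (mul_pos (rpow_pos_of_pos (abs_pos.mpr (mul_ne_zero hβ hx0)) _)
        (hpos x hx))
  rw [integral_image_eq_integral_abs_deriv_smul hIo.measurableSet
    (fun x hx => (hu x hx).hasDerivWithinAt) hanti.injOn]
  refine setIntegral_congr_ae hIo.measurableSet ?_
  -- at `x = 0` the derivative of `u` vanishes, so `h` need not be differentiable at `u 0`
  filter_upwards [volume.ae_ne 0] with x hx0 hx
  have hfx := hpos x hx
  have hc : 0 < |β * x| := abs_pos.mpr (mul_ne_zero hβ hx0)
  rw [smul_eq_mul, abs_rpow_mul_deriv_upTransform hIo hβ hf hu hh hx hx0 hfx, hh x hx,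
    upPoint_two_sub hβ, upDeriv_two_sub hβ, abs_neg, abs_of_pos (by positivity),
    inv_rpow hfx.le, rpow_neg hc.le, rpow_sub hfx, rpow_one]
  field_simp

theorem down_entropy_is_fisher_general
    (α xi xf : ℝ) (hα : α ≠ 2) (I : Set ℝ) (hI : I = Set.Ioo xi xf)
    (f g u h : ℝ → ℝ) (lam p β : ℝ)
    (hf : IsDensityOn f I) (hmon : IsSmoothDecOn f I)
    (hβ : β ≠ 0)
    (hg : IsDownTransform α f g I)
    (hu : ∀ x ∈ I, HasDerivAt u (upDeriv (2 - β) f x) x)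
    (hh : ∀ x ∈ I, h (u x) = upPoint (2 - β) x) :
    (∫ s in sChange α f '' I, g s ^ lam) ^ (1 / (1 - lam))
      = ((∫ x in I, |f x ^ ((2 - α) - 2) * deriv f x| ^ (1 - lam) * f x)
          ^ (((1 - lam) * (2 - α))⁻¹)) ^ (2 - α) ∧
    (∫ v in u '' I, |h v ^ (β - 2) * deriv h v| ^ p * h v) ^ ((p * β)⁻¹)
      = ((∫ x in I, f x ^ (1 - p)) ^ ((1 - (1 - p))⁻¹)) ^ β⁻¹ := by
  subst hI
  have hcont : ContinuousOn f (Ioo xi xf) := fun x hx =>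
    (hmon.1 x hx).continuousAt.continuousWithinAt
  rw [integral_downTransform_rpow isOpen_Ioo (convex_Ioo xi xf) hα hf.pos hmon hg,
    integral_upTransform_fisher isOpen_Ioo (convex_Ioo xi xf) hβ hf.pos hcont hu hh]
  have hfisher : 0 ≤ ∫ x in Ioo xi xf, |f x ^ ((2 - α) - 2) * deriv f x| ^ (1 - lam) * f x :=
    setIntegral_nonneg measurableSet_Ioo fun x hx => by positivity [hf.pos x hx]
  have hentropy : 0 ≤ ∫ x in Ioo xi xf, f x ^ (1 - p) :=
    setIntegral_nonneg measurableSet_Ioo fun x hx => rpow_nonneg (hf.pos x hx).le _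
  rw [← rpow_mul hfisher, ← rpow_mul hentropy, mul_inv,
    inv_mul_cancel_right₀ (sub_ne_zero.mpr hα.symm), one_div, sub_sub_cancel, mul_inv]
  exact ⟨rfl, rfl⟩

/-- the Rényi entropy power of the down transform is a Fisher-like
information of the original density, `N_λ[D_α f] = φ_{1-λ,2-α}[f]^(2-α)`; equivalently
`φ_{p,β}[U_{2-β} f] = N_{1-p}[f]^(1/β)`. -/
theorem down_entropy_is_fisher
    (α xi xf : ℝ) (hα : α ≠ 2) (I : Set ℝ) (hI : I = Set.Ioo xi xf)
    (f g u h : ℝ → ℝ) (lam p β : ℝ)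
    (hf : IsDensityOn f I) (hmon : IsSmoothDecOn f I)
    (hlam : lam ≠ 1) (hp : p ≠ 0) (hβ : β ≠ 0)
    (hg : IsDownTransform α f g I)
    (hu : ∀ x ∈ I, HasDerivAt u (upDeriv (2 - β) f x) x)
    (hh : ∀ x ∈ I, h (u x) = upPoint (2 - β) x)
    (hint1 : MeasureTheory.IntegrableOn (fun s => g s ^ lam) (sChange α f '' I))
    (hint2 : MeasureTheory.IntegrableOn
      (fun x => |f x ^ ((2 - α) - 2) * deriv f x| ^ (1 - lam) * f x) I)
    (hint3 : MeasureTheory.IntegrableOn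
      (fun v => |h v ^ (β - 2) * deriv h v| ^ p * h v) (u '' I))
    (hint4 : MeasureTheory.IntegrableOn (fun x => f x ^ (1 - p)) I) :
    (∫ s in sChange α f '' I, g s ^ lam) ^ (1 / (1 - lam))
      = ((∫ x in I, |f x ^ ((2 - α) - 2) * deriv f x| ^ (1 - lam) * f x)
          ^ (((1 - lam) * (2 - α))⁻¹)) ^ (2 - α) ∧
    (∫ v in u '' I, |h v ^ (β - 2) * deriv h v| ^ p * h v) ^ ((p * β)⁻¹)
      = ((∫ x in I, f x ^ (1 - p)) ^ ((1 - (1 - p))⁻¹)) ^ β⁻¹ :=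
  down_entropy_is_fisher_general α xi xf hα I hI f g u h lam p β hf hmon hβ hg hu hh
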